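/- arXiv:2405.12883 — 2 statements merged into one kernel-verified Lean document; each statement's English description precedes it below -/
import Mathlib

section
/- Let Θ ∈ (0, 2π), α = e^{-iΘ}, and d ∈ (π/Θ)ℤ (so α^d ∈ ℝ, i.e. sin(dΘ) = 0). Then the real-linear map F : ℝ[T] → ℝ[T] sending P to the polynomial t ↦ Im(α^d · P(t - iΘ)) is surjective with kernel equal to the constant polynomials; in particular, for each Q ∈ ℝ[T] the solution set of F(P) = Q has the form {P₀ + c : c ∈ ℝ} for some P₀ with deg P₀ = deg Q + 1, and there is a unique solution vanishing at 0. -/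
open Polynomial Complex

/-!
Since `sin (dΘ) = 0`, the factor `α^d = cos (dΘ) = ±1` is real, so `F = cos (dΘ) • L` with
`L P = Im P(X - iΘ)`. In the Taylor expansion of `P(X - iΘ)` the top coefficient is real and the
next one has imaginary part `-Θ n a` (`n = deg P`, `a` its leading coefficient), so `L` kills
constants and lowers the degree of every nonconstant polynomial by exactly one. Any linear map on
`K[X]` with this property has the constants as kernel, and it is onto: inductively, subtracting a
multiple of `L (X ^ (n + 1))` removes the top coefficient of a polynomial of degree `n`.
-/

namespace Polynomial

theorem coeff_taylor_natDegree_sub_one {R : Type*} [CommSemiring R] (f : R[X]) (r : R) :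
    (taylor r f).coeff (f.natDegree - 1) =
      f.coeff (f.natDegree - 1) + f.natDegree * f.leadingCoeff * r := by
  rw [taylor_coeff]
  obtain h | ⟨m, hm⟩ : f.natDegree = 0 ∨ ∃ m, f.natDegree = m + 1 :=
    (Nat.eq_zero_or_eq_succ_pred _).imp_right fun h => ⟨_, h⟩
  · rw [eq_C_of_natDegree_eq_zero h]
    simp
  · have hle : (hasseDeriv m f).natDegree ≤ 1 := (natDegree_hasseDeriv_le f m).trans (by omega)
    rw [hm, Nat.add_sub_cancel, eq_X_add_C_of_natDegree_le_one hle, leadingCoeff, hm]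
    simp [hasseDeriv_coeff, add_comm 1 m, add_comm (f.coeff m), mul_comm]

theorem coeff_taylor_of_natDegree_le {R : Type*} [CommSemiring R] (f : R[X]) (r : R) {k : ℕ}
    (hk : f.natDegree ≤ k) : (taylor r f).coeff k = f.coeff k := by
  obtain rfl | hk := hk.eq_or_lt
  · exact coeff_taylor_natDegree r f
  · rw [coeff_eq_zero_of_natDegree_lt hk,
      coeff_eq_zero_of_natDegree_lt (by rwa [natDegree_taylor])]

structure IsDegreeLowering {R : Type*} [Semiring R] (f : R[X] →ₗ[R] R[X]) : Prop where
  map_C (c : R) : f (C c) = 0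
  degree_map (P : R[X]) (hP : 0 < P.natDegree) : (f P).degree = ↑(P.natDegree - 1)

namespace IsDegreeLowering

section Ring

variable {R : Type*} [Ring R] {f : R[X] →ₗ[R] R[X]}

theorem map_eq_zero_iff (hf : IsDegreeLowering f) {P : R[X]} : f P = 0 ↔ ∃ c, P = C c := by
  refine ⟨fun h => ⟨P.coeff 0, eq_C_of_natDegree_eq_zero ?_⟩, ?_⟩
  · by_contra hP
    simpa [h] using hf.degree_map P (Nat.pos_of_ne_zero hP)
  · rintro ⟨c, rfl⟩
    exact hf.map_C c

theorem map_eq_map_iff (hf : IsDegreeLowering f) {P P₀ : R[X]} :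
    f P = f P₀ ↔ ∃ c, P = P₀ + C c := by
  rw [← sub_eq_zero, ← map_sub, hf.map_eq_zero_iff]
  simp only [sub_eq_iff_eq_add']

theorem degree_eq_degree_map_add_one (hf : IsDegreeLowering f) {P : R[X]} (hP : f P ≠ 0) :
    P.degree = (f P).degree + 1 := by
  have hdeg : 0 < P.natDegree := Nat.pos_of_ne_zero fun h =>
    hP (hf.map_eq_zero_iff.2 ⟨_, eq_C_of_natDegree_eq_zero h⟩)
  rw [hf.degree_map P hdeg, degree_eq_natDegree (ne_zero_of_natDegree_gt hdeg)]
  norm_cast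
  omega

theorem existsUnique_eval_zero_map_eq (hf : IsDegreeLowering f) (P₀ : R[X]) :
    ∃! P, P.eval 0 = 0 ∧ f P = f P₀ := by
  refine ⟨P₀ - C (P₀.eval 0), ⟨by simp, by simp [hf.map_C]⟩, ?_⟩
  rintro P ⟨h0, hP⟩
  obtain ⟨c, rfl⟩ := hf.map_eq_map_iff.1 hP
  rw [eval_add, eval_C] at h0
  rw [eq_neg_of_add_eq_zero_right h0, C_neg, sub_eq_add_neg]

end Ring

section Field

variable {K : Type*} [Field K] {f : K[X] →ₗ[K] K[X]}

theorem smul (hf : IsDegreeLowering f) {c : K} (hc : c ≠ 0) : IsDegreeLowering (c • f) where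
  map_C a := by simp [hf.map_C]
  degree_map P hP := by
    rw [LinearMap.smul_apply, smul_eq_C_mul, degree_C_mul hc, hf.degree_map P hP]

theorem surjective (hf : IsDegreeLowering f) : Function.Surjective f := by
  suffices h : ∀ n : ℕ, ∀ Q : K[X], Q.degree < n → ∃ P, f P = Q from
    fun Q => h (Q.natDegree + 1) Q (degree_lt_iff_coeff_zero _ _ |>.2 fun m hm =>
      coeff_eq_zero_of_natDegree_lt (by exact_mod_cast hm))
  intro n
  induction n with
  | zero =>
    intro Q hQ
    rw [Nat.cast_zero, Nat.WithBot.lt_zero_iff, degree_eq_bot] at hQ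
    exact ⟨0, by rw [map_zero, hQ]⟩
  | succ n ih =>
    intro Q hQ
    have hdeg : (f (X ^ (n + 1))).degree = n := by simpa using hf.degree_map (X ^ (n + 1))
    set a := (f (X ^ (n + 1))).coeff n
    have ha : a ≠ 0 := coeff_ne_zero_of_eq_degree hdeg
    set c := Q.coeff n / a
    have hlt : (Q - c • f (X ^ (n + 1))).degree < n := by
      rw [degree_lt_iff_coeff_zero]
      intro m hm
      obtain rfl | hm := hm.eq_or_lt
      · simp [c, a, ha]
      · rw [coeff_sub, coeff_smul, coeff_eq_zero_of_degree_lt (hQ.trans_le (by exact_mod_cast hm)),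
          coeff_eq_zero_of_degree_lt (by rw [hdeg]; exact_mod_cast hm), smul_zero, sub_zero]
    obtain ⟨P, hP⟩ := ih _ hlt
    exact ⟨P + c • X ^ (n + 1), by rw [map_add, map_smul, hP, sub_add_cancel]⟩

theorem exists_map_eq_and_degree_eq (hf : IsDegreeLowering f) (Q : K[X]) :
    ∃ P₀, f P₀ = Q ∧ P₀.degree = Q.degree + 1 := by
  by_cases hQ : Q = 0
  · exact ⟨0, by simp [hQ]⟩
  · obtain ⟨P₀, rfl⟩ := hf.surjective Q
    exact ⟨P₀, rfl, hf.degree_eq_degree_map_add_one hQ⟩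

end Field

end IsDegreeLowering

noncomputable def imPart : ℂ[X] →ₗ[ℝ] ℝ[X] :=
  lsum fun n => monomial n ∘ₗ imLm

@[simp]
theorem coeff_imPart (q : ℂ[X]) (n : ℕ) : (imPart q).coeff n = (q.coeff n).im := by
  simp only [imPart, lsum_apply, coeff_sum, LinearMap.comp_apply, imLm_coe, coeff_monomial]
  rw [sum_def, Finset.sum_ite_eq']
  split_ifs with h
  · rfl
  · rw [notMem_support_iff.1 h, zero_im]

theorem natDegree_imPart_le (q : ℂ[X]) : (imPart q).natDegree ≤ q.natDegree :=
  natDegree_le_iff_coeff_eq_zero.2 fun _ h => by simp [coeff_eq_zero_of_natDegree_lt h]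

theorem eval_imPart (q : ℂ[X]) (t : ℝ) : (imPart q).eval t = (q.eval (t : ℂ)).im := by
  rw [eval_eq_sum_range' (Nat.lt_succ_of_le (natDegree_imPart_le q)), eval_eq_sum_range, im_sum]
  simp [← ofReal_pow, mul_im]

noncomputable def imShift (Θ : ℝ) : ℝ[X] →ₗ[ℝ] ℝ[X] :=
  imPart ∘ₗ (taylor (-(I * Θ))).restrictScalars ℝ ∘ₗ (mapAlg ℝ ℂ).toLinearMap

theorem imShift_apply (Θ : ℝ) (P : ℝ[X]) :
    imShift Θ P = imPart (taylor (-(I * Θ)) (P.map (algebraMap ℝ ℂ))) := rfl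

theorem eval_imShift (Θ : ℝ) (P : ℝ[X]) (t : ℝ) :
    (imShift Θ P).eval t = ((P.map (algebraMap ℝ ℂ)).eval (t - I * Θ)).im := by
  rw [imShift_apply, eval_imPart, taylor_eval, sub_eq_add_neg]

theorem coeff_imShift_of_natDegree_le (Θ : ℝ) {P : ℝ[X]} {k : ℕ} (hk : P.natDegree ≤ k) :
    (imShift Θ P).coeff k = 0 := by
  rw [imShift_apply, coeff_imPart, coeff_taylor_of_natDegree_le _ _ (by rwa [natDegree_map]),
    coeff_map]
  exact ofReal_im _

theorem coeff_imShift_natDegree_sub_one (Θ : ℝ) (P : ℝ[X]) :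
    (imShift Θ P).coeff (P.natDegree - 1) = -(P.natDegree * P.leadingCoeff * Θ) := by
  have h := coeff_taylor_natDegree_sub_one (P.map (algebraMap ℝ ℂ)) (-(I * Θ))
  rw [natDegree_map] at h
  rw [imShift_apply, coeff_imPart, h]
  simp [coeff_map, leadingCoeff_map]

theorem isDegreeLowering_imShift {Θ : ℝ} (hΘ : Θ ≠ 0) : IsDegreeLowering (imShift Θ) where
  map_C c := ext fun k => coeff_imShift_of_natDegree_le Θ (by simp)
  degree_map P hP := by
    refine degree_eq_of_le_of_coeff_ne_zero ?_ ?_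
    · refine (degree_le_iff_coeff_zero _ _).2 fun m hm => coeff_imShift_of_natDegree_le Θ ?_
      have : P.natDegree - 1 < m := by exact_mod_cast hm
      omega
    · rw [coeff_imShift_natDegree_sub_one]
      exact neg_ne_zero.2 (mul_ne_zero (mul_ne_zero (Nat.cast_ne_zero.2 hP.ne')
        (leadingCoeff_ne_zero.2 (ne_zero_of_natDegree_gt hP))) hΘ)

end Polynomial

theorem stmt1_general (Θ d : ℝ) (hΘ : 0 < Θ)
    (hd : ∃ n : ℤ, d * Θ = Real.pi * n) :
    (∀ P : Polynomial ℝ,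
      (∀ t : ℝ,
        (Complex.exp (-(Complex.I * (d : ℂ) * (Θ : ℂ))) *
          (P.map (algebraMap ℝ ℂ)).eval ((t : ℂ) - Complex.I * (Θ : ℂ))).im = 0)
      ↔ ∃ c : ℝ, P = Polynomial.C c) ∧
    (∀ Q : Polynomial ℝ,
      (∃ P₀ : Polynomial ℝ, P₀.degree = Q.degree + 1 ∧
        ∀ P : Polynomial ℝ,
          ((∀ t : ℝ,
            (Complex.exp (-(Complex.I * (d : ℂ) * (Θ : ℂ))) *
              (P.map (algebraMap ℝ ℂ)).eval ((t : ℂ) - Complex.I * (Θ : ℂ))).im = Q.eval t)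
           ↔ ∃ c : ℝ, P = P₀ + Polynomial.C c)) ∧
      (∃! P : Polynomial ℝ, P.eval 0 = 0 ∧
        ∀ t : ℝ,
          (Complex.exp (-(Complex.I * (d : ℂ) * (Θ : ℂ))) *
            (P.map (algebraMap ℝ ℂ)).eval ((t : ℂ) - Complex.I * (Θ : ℂ))).im = Q.eval t)) := by
  obtain ⟨n, hn⟩ := hd
  have hsin : Real.sin (d * Θ) = 0 := by rw [hn, mul_comm]; exact Real.sin_int_mul_pi n
  have hcos : Real.cos (d * Θ) ≠ 0 := by
    rcases Real.sin_eq_zero_iff_cos_eq.1 hsin with h | h <;> norm_num [h]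
  have hexp : exp (-(I * d * Θ)) = Real.cos (d * Θ) := by
    rw [show -(I * d * Θ) = ((-(d * Θ) : ℝ) : ℂ) * I by push_cast; ring, exp_mul_I,
      ← ofReal_cos, ← ofReal_sin, Real.sin_neg, hsin, Real.cos_neg]
    simp
  set f := Real.cos (d * Θ) • imShift Θ
  have hf : IsDegreeLowering f := (isDegreeLowering_imShift hΘ.ne').smul hcos
  have hF (P Q : ℝ[X]) : (∀ t : ℝ, (exp (-(I * d * Θ)) *
      (P.map (algebraMap ℝ ℂ)).eval (t - I * Θ)).im = Q.eval t) ↔ f P = Q := by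
    have (t : ℝ) : (exp (-(I * d * Θ)) * (P.map (algebraMap ℝ ℂ)).eval (t - I * Θ)).im =
        (f P).eval t := by
      rw [hexp, im_ofReal_mul, ← eval_imShift, LinearMap.smul_apply, eval_smul, smul_eq_mul]
    simp only [this]
    exact ⟨Polynomial.funext, by rintro rfl _; rfl⟩
  refine ⟨fun P => ?_, fun Q => ?_⟩
  · simpa only [eval_zero] using (hF P 0).trans hf.map_eq_zero_iff
  · obtain ⟨P₀, rfl, hdeg⟩ := hf.exists_map_eq_and_degree_eq Q
    exact ⟨⟨P₀, hdeg, fun P => (hF P _).trans hf.map_eq_map_iff⟩,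
      by simpa only [hF] using hf.existsUnique_eval_zero_map_eq P₀⟩

/-- Lemma 2.2 (case 2): for `d ∈ (π/Θ)ℤ` (i.e. `α^d ∈ ℝ`), the map
`F : P ↦ (t ↦ Im(α^d · P(t - iΘ)))` on real polynomials is surjective with
kernel the constants; the solution set of `F(P) = Q` is `{P₀ + c : c ∈ ℝ}` with
`deg P₀ = deg Q + 1`, and there is a unique solution vanishing at `0`. -/
theorem stmt1 (Θ d : ℝ) (hΘ : 0 < Θ) (hΘ2 : Θ < 2 * Real.pi)
    (hd : ∃ n : ℤ, d * Θ = Real.pi * n) :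
    (∀ P : Polynomial ℝ,
      (∀ t : ℝ,
        (Complex.exp (-(Complex.I * (d : ℂ) * (Θ : ℂ))) *
          (P.map (algebraMap ℝ ℂ)).eval ((t : ℂ) - Complex.I * (Θ : ℂ))).im = 0)
      ↔ ∃ c : ℝ, P = Polynomial.C c) ∧
    (∀ Q : Polynomial ℝ,
      (∃ P₀ : Polynomial ℝ, P₀.degree = Q.degree + 1 ∧
        ∀ P : Polynomial ℝ,
          ((∀ t : ℝ,
            (Complex.exp (-(Complex.I * (d : ℂ) * (Θ : ℂ))) *
              (P.map (algebraMap ℝ ℂ)).eval ((t : ℂ) - Complex.I * (Θ : ℂ))).im = Q.eval t)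
           ↔ ∃ c : ℝ, P = P₀ + Polynomial.C c)) ∧
      (∃! P : Polynomial ℝ, P.eval 0 = 0 ∧
        ∀ t : ℝ,
          (Complex.exp (-(Complex.I * (d : ℂ) * (Θ : ℂ))) *
            (P.map (algebraMap ℝ ℂ)).eval ((t : ℂ) - Complex.I * (Θ : ℂ))).im = Q.eval t)) :=
  stmt1_general Θ d hΘ hd
end

section
/- Let a < b be reals, n ≥ 1, and let (d_i, ℓ_i), i = 1,…,n, be n distinct pairs in ℝ × ℕ. Let f_1, …, f_n be nonzero continuous functions [a,b] → ℂ, and define φ(r, θ) = Σ_{i=1}^n r^{d_i} (ln r)^{ℓ_i} f_i(θ). Then there exist a nontrivial closed subinterval I ⊆ [a,b], a constant c > 0, and r₁ > 0 such that for all 0 < r < r₁ and all θ ∈ I, |φ(r,θ)| > c · r^{min_j d_j}. -/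
/-!
Order the pairs `(dᵢ, ℓᵢ)` so that `i₀` has the least `d` and, among those, the largest
`ℓ`. Since the pairs are distinct, every other term `r^{dᵢ} (ln r)^{ℓᵢ}` is
`o(r^{d_{i₀}} (ln r)^{ℓ_{i₀}})` as `r → 0⁺`. On a subinterval where `|f_{i₀}| ≥ m > 0`, and
with the other `fᵢ` bounded, the sum is therefore at least
`(m/2) r^{d_{i₀}} |ln r|^{ℓ_{i₀}} ≥ (m/2) r^{d_{i₀}}` for small `r`.
-/

open Set Filter Real Topology Asymptotics Finset

theorem exists_Icc_subset_of_mem_nhdsWithin_Icc {a b x : ℝ} {s : Set ℝ} (hab : a < b)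
    (hx : x ∈ Icc a b) (hs : s ∈ 𝓝[Icc a b] x) :
    ∃ a' b', a ≤ a' ∧ a' < b' ∧ b' ≤ b ∧ Icc a' b' ⊆ s := by
  obtain ⟨δ, hδ, hball⟩ := Metric.mem_nhdsWithin_iff.mp hs
  refine ⟨max a (x - δ / 2), min b (x + δ / 2), le_max_left _ _, ?_, min_le_left _ _,
    fun θ hθ => hball ⟨?_, Icc_subset_Icc (le_max_left _ _) (min_le_left _ _) hθ⟩⟩
  · simp only [max_lt_iff, lt_min_iff]
    exact ⟨⟨hab, by linarith [hx.2]⟩, by linarith [hx.1], by linarith⟩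
  · refine Metric.closedBall_subset_ball (half_lt_self hδ) ?_
    rw [Real.closedBall_eq_Icc]
    exact Icc_subset_Icc (le_max_right _ _) (min_le_right _ _) hθ

theorem exists_forall_ne_lt_or_eq_and_gt {ι α β : Type*} [Finite ι] [Nonempty ι]
    [LinearOrder α] [LinearOrder β] (d : ι → α) (ℓ : ι → β)
    (hdist : Function.Injective fun i => (d i, ℓ i)) :
    ∃ i₀, ∀ i ≠ i₀, d i₀ < d i ∨ d i₀ = d i ∧ ℓ i < ℓ i₀ := by
  set key : ι → α ×ₗ βᵒᵈ := fun i => toLex (d i, OrderDual.toDual (ℓ i))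
  have hkey : Function.Injective key := fun i j h => hdist (by simpa [key] using h)
  obtain ⟨i₀, hi₀⟩ := Finite.exists_min key
  refine ⟨i₀, fun i hi => ?_⟩
  have hlt : key i₀ < key i := (hi₀ i).lt_of_ne fun h => hi (hkey h).symm
  simpa [key, Prod.Lex.toLex_lt_toLex] using hlt

theorem eventually_one_le_abs_log : ∀ᶠ r in 𝓝[>] (0 : ℝ), 1 ≤ |log r| :=
  (tendsto_abs_atBot_atTop.comp tendsto_log_nhdsGT_zero).eventually_ge_atTop 1

theorem isLittleO_rpow_mul_log_pow {d D : ℝ} {ℓ L : ℕ} (h : D < d ∨ D = d ∧ ℓ < L) :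
    (fun r => r ^ d * log r ^ ℓ) =o[𝓝[>] 0] fun r => r ^ D * log r ^ L := by
  have hquot : (fun r => r ^ (d - D) * log r ^ ℓ) =o[𝓝[>] 0] fun r => log r ^ L := by
    rcases h with h | ⟨rfl, h⟩
    · have hsmall : (fun r => r ^ (d - D) * log r ^ ℓ) =o[𝓝[>] 0] fun _ => (1 : ℝ) := by
        refine (((isBigO_refl (fun r : ℝ => r ^ (d - D)) _).mul_isLittleO
          (isLittleO_abs_log_rpow_rpow_nhdsGT_zero ℓ (neg_lt_zero.2 (sub_pos.2 h)))).congr'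
          ?_ ?_).of_norm_left
        all_goals filter_upwards [self_mem_nhdsWithin] with r (hr : 0 < r)
        · simp [abs_of_pos (rpow_pos_of_pos hr _)]
        · rw [rpow_neg hr.le, mul_inv_cancel₀ (rpow_pos_of_pos hr _).ne']
      refine hsmall.trans_isBigO (IsBigO.of_bound 1 ?_)
      filter_upwards [eventually_one_le_abs_log] with r hr
      simpa using one_le_pow₀ hr
    · simp only [sub_self, rpow_zero, one_mul]
      exact (isLittleO_pow_pow_cobounded_of_lt h).comp_tendsto
        (tendsto_log_nhdsGT_zero.mono_right IsOrderBornology.atBot_le_cobounded)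
  refine ((isBigO_refl (fun r : ℝ => r ^ D) _).mul_isLittleO hquot).congr' ?_ .rfl
  filter_upwards [self_mem_nhdsWithin] with r (hr : 0 < r)
  rw [← mul_assoc, ← rpow_add hr, add_sub_cancel]

theorem eventually_norm_sum_smul_ge_of_isLittleO {ι α β E : Type*} [Fintype ι]
    [NormedAddCommGroup E] [NormedSpace ℝ E] {l : Filter β} {w : ι → β → ℝ}
    {F : ι → α → E} {T : Set α} {i₀ : ι} {m : ℝ} {C : ι → ℝ}
    (hw : ∀ i ≠ i₀, w i =o[l] w i₀) (hC : ∀ i, ∀ θ ∈ T, ‖F i θ‖ ≤ C i)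
    (hm : 0 < m) (hF : ∀ θ ∈ T, m ≤ ‖F i₀ θ‖) :
    ∀ᶠ r in l, ∀ θ ∈ T, m / 2 * ‖w i₀ r‖ ≤ ‖∑ i, w i r • F i θ‖ := by
  classical
  have hsmall : (fun r => ∑ i ∈ univ.erase i₀, C i * ‖w i r‖) =o[l] w i₀ :=
    IsLittleO.fun_sum fun i hi => (hw i (ne_of_mem_erase hi)).norm_left.const_mul_left (C i)
  filter_upwards [hsmall.bound (half_pos hm)] with r hr θ hθ
  have hmain : m * ‖w i₀ r‖ ≤ ‖w i₀ r • F i₀ θ‖ := by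
    rw [norm_smul, mul_comm]
    exact mul_le_mul_of_nonneg_left (hF θ hθ) (norm_nonneg _)
  have herr : ‖∑ i ∈ univ.erase i₀, w i r • F i θ‖ ≤ m / 2 * ‖w i₀ r‖ :=
    calc ‖∑ i ∈ univ.erase i₀, w i r • F i θ‖
        ≤ ∑ i ∈ univ.erase i₀, C i * ‖w i r‖ := norm_sum_le_of_le _ fun i _ => by
          rw [norm_smul, mul_comm]
          exact mul_le_mul_of_nonneg_right (hC i θ hθ) (norm_nonneg _)
      _ ≤ ‖∑ i ∈ univ.erase i₀, C i * ‖w i r‖‖ := le_norm_self _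
      _ ≤ m / 2 * ‖w i₀ r‖ := hr
  rw [← add_sum_erase _ _ (mem_univ i₀)]
  linarith [norm_sub_le_norm_add (w i₀ r • F i₀ θ)
    (∑ i ∈ univ.erase i₀, w i r • F i θ)]

/-- Lemma 3.2 (behavior at the origin): for
`φ(r,θ) = Σᵢ r^{dᵢ} (ln r)^{ℓᵢ} fᵢ(θ)` with distinct pairs `(dᵢ,ℓᵢ)` and
nonzero continuous `fᵢ` on `[a,b]`, there are a nontrivial closed subinterval
`I ⊆ [a,b]`, `c > 0` and `r₁ > 0` such that `|φ(r,θ)| > c · r^{min dⱼ}` for all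
`0 < r < r₁`, `θ ∈ I`. -/
theorem stmt5 (a b : ℝ) (hab : a < b) (n : ℕ) (hn : 0 < n)
    (d : Fin n → ℝ) (ℓ : Fin n → ℕ)
    (hdist : Function.Injective (fun i => (d i, ℓ i)))
    (f : Fin n → ℝ → ℂ)
    (hfc : ∀ i, ContinuousOn (f i) (Set.Icc a b))
    (hfne : ∀ i, ∃ θ ∈ Set.Icc a b, f i θ ≠ 0) :
    ∃ a' b' : ℝ, a ≤ a' ∧ a' < b' ∧ b' ≤ b ∧ ∃ c : ℝ, 0 < c ∧ ∃ r₁ : ℝ, 0 < r₁ ∧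
      ∀ r : ℝ, 0 < r → r < r₁ → ∀ θ ∈ Set.Icc a' b',
        c * r ^ (Finset.univ.inf'
            (Finset.univ_nonempty_iff.mpr (Fin.pos_iff_nonempty.mp hn)) d)
          < ‖∑ i, ((r ^ d i * Real.log r ^ ℓ i : ℝ) : ℂ) * f i θ‖ := by
  have : Nonempty (Fin n) := Fin.pos_iff_nonempty.mp hn
  obtain ⟨i₀, hi₀⟩ := exists_forall_ne_lt_or_eq_and_gt d ℓ hdist
  have hmin : univ.inf' univ_nonempty d = d i₀ :=
    le_antisymm (inf'_le _ (mem_univ _)) (le_inf' _ _ fun i _ => by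
      rcases eq_or_ne i i₀ with rfl | hi
      exacts [le_rfl, (hi₀ i hi).elim le_of_lt fun h => h.1.le])
  rw [hmin]
  obtain ⟨θ₀, hθ₀, hne⟩ := hfne i₀
  set m := ‖f i₀ θ₀‖ / 2
  have hm : 0 < m := half_pos (norm_pos_iff.2 hne)
  obtain ⟨a', b', ha', hab', hb', hI⟩ := exists_Icc_subset_of_mem_nhdsWithin_Icc hab hθ₀
    ((hfc i₀ θ₀ hθ₀).norm.eventually
      (eventually_ge_nhds (half_lt_self (norm_pos_iff.2 hne))))
  choose C hC using fun i => isCompact_Icc.exists_bound_of_continuousOn (hfc i)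
  have hlower := eventually_norm_sum_smul_ge_of_isLittleO (l := 𝓝[>] 0)
    (w := fun i r => r ^ d i * log r ^ ℓ i) (T := Icc a' b')
    (fun i hi => isLittleO_rpow_mul_log_pow (hi₀ i hi))
    (fun i θ hθ => hC i θ (Icc_subset_Icc ha' hb' hθ)) hm hI
  obtain ⟨r₁, hr₁, hsub⟩ :=
    mem_nhdsGT_iff_exists_Ioo_subset.mp (hlower.and eventually_one_le_abs_log)
  refine ⟨a', b', ha', hab', hb', m / 4, by positivity, r₁, hr₁,
    fun r hr hrr₁ θ hθ => ?_⟩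
  obtain ⟨hφ, hlog⟩ := hsub ⟨hr, hrr₁⟩
  have hrD : 0 < r ^ d i₀ := rpow_pos_of_pos hr _
  calc m / 4 * r ^ d i₀ < m / 2 * r ^ d i₀ := by gcongr; linarith
    _ ≤ m / 2 * ‖r ^ d i₀ * log r ^ ℓ i₀‖ := by
      rw [norm_mul, norm_pow, norm_of_nonneg hrD.le, norm_eq_abs]
      gcongr
      exact le_mul_of_one_le_right hrD.le (one_le_pow₀ hlog)
    _ ≤ _ := hφ θ hθ
    _ = _ := by simp only [Complex.real_smul]
end
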